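/- Let G be an LWF chain graph with vertex set V and let P be a joint probability distribution over random variables indexed by V that satisfies the global Markov property with respect to G and is faithful to G. Then for every T ∈ V, Mb(T) is the unique inclusion-minimal set S ⊆ V∖{T} such that, under P, the variable T is conditionally independent of the variables V∖({T}∪S) given the variables S. -/

import Mathlib

/- Formalization of LWF chain graphs, routes, sections, c-separation,
   minimal complexes, Markov blankets, moral graphs, and ancestral sets. -/

namespace LWF

/-- An LWF chain graph: a mixed graph with directed edges `dir` and (symmetric)
undirected edges `undir`, no loops, no pair of vertices joined by more than one
edge, and no partially directed cycles. -/
structure ChainGraph (V : Type*) where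
  dir : V → V → Prop
  undir : V → V → Prop
  undir_symm : ∀ u v, undir u v → undir v u
  dir_irrefl : ∀ v, ¬ dir v v
  undir_irrefl : ∀ v, ¬ undir v v
  dir_asymm : ∀ u v, dir u v → ¬ dir v u
  dir_not_undir : ∀ u v, dir u v → ¬ undir u v
  /-- No partially directed cycle: there is no sequence `ρ 0, …, ρ n` (`n ≥ 2`)
  with `ρ n = ρ 0`, the vertices `ρ 0, …, ρ (n-1)` distinct, every consecutive
  pair joined by `dir` or `undir` (in the forward direction), and at least one
  forward directed edge on it. -/
  no_partially_directed_cycle :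
    ∀ (n : ℕ) (ρ : ℕ → V), 2 ≤ n → ρ n = ρ 0 →
      (∀ i j, i < j → j < n → ρ i ≠ ρ j) →
      (∀ i, i < n → dir (ρ i) (ρ (i+1)) ∨ undir (ρ i) (ρ (i+1))) →
      ¬ ∃ i, i < n ∧ dir (ρ i) (ρ (i+1))

namespace ChainGraph

variable {V : Type*}

/-- Two vertices are adjacent if they are joined by a directed or an undirected edge. -/
def Adj (G : ChainGraph V) (u v : V) : Prop := G.dir u v ∨ G.dir v u ∨ G.undir u v

/-- A partially directed path from `u` to `w`: a sequence of distinct vertices,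
each consecutive pair joined by a forward directed or an undirected edge, with
at least one directed edge on it. -/
def PDPath (G : ChainGraph V) (u w : V) : Prop :=
  ∃ (n : ℕ) (ρ : ℕ → V), 1 ≤ n ∧ ρ 0 = u ∧ ρ n = w ∧
    (∀ i j, i ≤ n → j ≤ n → i ≠ j → ρ i ≠ ρ j) ∧
    (∀ i, i < n → G.dir (ρ i) (ρ (i+1)) ∨ G.undir (ρ i) (ρ (i+1))) ∧
    (∃ i, i < n ∧ G.dir (ρ i) (ρ (i+1)))

/-- `an(Z)`: the set of vertices having a partially directed path to some vertex of `Z`. -/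
def anc (G : ChainGraph V) (Z : Set V) : Set V := {x | ∃ z ∈ Z, G.PDPath x z}

/-- Parents of `v`. -/
def pa (G : ChainGraph V) (v : V) : Set V := {u | G.dir u v}

/-- Children of `v`. -/
def ch (G : ChainGraph V) (v : V) : Set V := {u | G.dir v u}

/-- Neighbours of `v`. -/
def nb (G : ChainGraph V) (v : V) : Set V := {u | G.undir u v}

/-- A minimal complex `a → ρ 1 − ⋯ − ρ n ← b` (with `ρ 0 = a`, `ρ (n+1) = b`,
`n ≥ 1`): all vertices distinct, the indicated edges present, and it is an
induced subgraph, i.e. the only adjacencies among its vertices are between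
consecutive ones (in particular `a` and `b` are non-adjacent). -/
def IsMinimalComplex (G : ChainGraph V) (a b : V) (n : ℕ) (ρ : ℕ → V) : Prop :=
  1 ≤ n ∧ ρ 0 = a ∧ ρ (n+1) = b ∧
  (∀ i j, i ≤ n+1 → j ≤ n+1 → i ≠ j → ρ i ≠ ρ j) ∧
  G.dir a (ρ 1) ∧ G.dir b (ρ n) ∧
  (∀ i, 1 ≤ i → i < n → G.undir (ρ i) (ρ (i+1))) ∧
  (∀ i j, i ≤ n+1 → j ≤ n+1 → G.Adj (ρ i) (ρ j) → j = i+1 ∨ i = j+1)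

/-- Complex-spouses of `a`. -/
def csp (G : ChainGraph V) (a : V) : Set V := {b | ∃ n ρ, G.IsMinimalComplex a b n ρ}

/-- The Markov blanket of `T`: parents, neighbours, children and complex-spouses of `T`. -/
def mb (G : ChainGraph V) (T : V) : Set V := G.pa T ∪ G.nb T ∪ G.ch T ∪ G.csp T

/-- A route in `G`: a sequence of `len + 1` vertices `vtx 0, …, vtx len`
(hence nonempty), each consecutive pair joined by an edge of `G`. -/
structure Route (G : ChainGraph V) where
  len : ℕ
  vtx : ℕ → V
  link : ∀ i, i < len → G.Adj (vtx i) (vtx (i+1))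

/-- The positions `a, …, b` of the route form a section: all steps inside are
undirected edges, and the run is maximal on both sides. -/
def Route.IsSection {G : ChainGraph V} (ω : Route G) (a b : ℕ) : Prop :=
  a ≤ b ∧ b ≤ ω.len ∧
  (∀ k, a ≤ k → k < b → G.undir (ω.vtx k) (ω.vtx (k+1))) ∧
  (0 < a → ¬ G.undir (ω.vtx (a-1)) (ω.vtx a)) ∧
  (b < ω.len → ¬ G.undir (ω.vtx b) (ω.vtx (b+1)))

/-- A collider section: a section which the route enters by an arrowhead at both
ends, i.e. `vtx (a-1) → vtx a − ⋯ − vtx b ← vtx (b+1)` occurs on the route. -/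
def Route.IsColliderSection {G : ChainGraph V} (ω : Route G) (a b : ℕ) : Prop :=
  ω.IsSection a b ∧ 0 < a ∧ b < ω.len ∧
  G.dir (ω.vtx (a-1)) (ω.vtx a) ∧ G.dir (ω.vtx (b+1)) (ω.vtx b)

/-- A route is active with respect to `Z` if every collider section of it
contains a vertex of `Z ∪ an(Z)` and no vertex of any non-collider section is in `Z`. -/
def Route.Active {G : ChainGraph V} (ω : Route G) (Z : Set V) : Prop :=
  (∀ a b, ω.IsColliderSection a b → ∃ k, a ≤ k ∧ k ≤ b ∧ ω.vtx k ∈ Z ∪ G.anc Z) ∧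
  (∀ a b, ω.IsSection a b → ¬ ω.IsColliderSection a b →
    ∀ k, a ≤ k → k ≤ b → ω.vtx k ∉ Z)

/-- A route is intercepted (blocked) by `Z` if it is not active with respect to `Z`. -/
def Route.Intercepted {G : ChainGraph V} (ω : Route G) (Z : Set V) : Prop :=
  ¬ ω.Active Z

/-- `X` and `Y` are c-separated given `Z`: every route between a vertex of `X`
and a vertex of `Y` is intercepted by `Z`. -/
def CSep (G : ChainGraph V) (X Y Z : Set V) : Prop :=
  ∀ ω : Route G,
    ((ω.vtx 0 ∈ X ∧ ω.vtx ω.len ∈ Y) ∨ (ω.vtx 0 ∈ Y ∧ ω.vtx ω.len ∈ X)) →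
    ω.Intercepted Z

/-- Moral graph adjacency: distinct `u`, `v` are adjacent in `G^m` iff they are
adjacent in `G` or are complex-spouses. -/
def MoralAdj (G : ChainGraph V) (u v : V) : Prop :=
  u ≠ v ∧ (G.dir u v ∨ G.dir v u ∨ G.undir u v ∨ u ∈ G.csp v ∨ v ∈ G.csp u)

/-- A set `A` is ancestral if it contains the boundary (parents and neighbours)
of each of its elements. -/
def Ancestral (G : ChainGraph V) (A : Set V) : Prop :=
  ∀ a ∈ A, ∀ u, (G.dir u a ∨ G.undir u a) → u ∈ A

/-- `An(A)`: the smallest ancestral set containing `A`. -/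
def An (G : ChainGraph V) (A : Set V) : Set V :=
  ⋂₀ {B : Set V | A ⊆ B ∧ G.Ancestral B}

/-- A minimal complex of the induced subgraph `G_A`: a minimal complex of `G`
all of whose vertices lie in `A`. -/
def IsMinimalComplexIn (G : ChainGraph V) (A : Set V) (a b : V) (n : ℕ) (ρ : ℕ → V) : Prop :=
  G.IsMinimalComplex a b n ρ ∧ ∀ i, i ≤ n+1 → ρ i ∈ A

/-- Adjacency in the moral graph `(G_A)^m` of the induced subgraph of `G` on `A`:
distinct `u, v ∈ A` joined by an edge of `G`, or complex-spouses in `G_A`. -/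
def MoralAdjIn (G : ChainGraph V) (A : Set V) (u v : V) : Prop :=
  u ∈ A ∧ v ∈ A ∧ u ≠ v ∧
    (G.dir u v ∨ G.dir v u ∨ G.undir u v ∨
      (∃ n ρ, G.IsMinimalComplexIn A u v n ρ) ∨ (∃ n ρ, G.IsMinimalComplexIn A v u n ρ))

end ChainGraph

/-- A path from `u` to `v` in an undirected graph with adjacency relation `R`:
a sequence of `n + 1 ≥ 2` distinct vertices `ρ 0 = u, …, ρ n = v` with each
consecutive pair adjacent. -/
def UPath {V : Type*} (R : V → V → Prop) (u v : V) (n : ℕ) (ρ : ℕ → V) : Prop :=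
  1 ≤ n ∧ ρ 0 = u ∧ ρ n = v ∧
  (∀ i j, i ≤ n → j ≤ n → i ≠ j → ρ i ≠ ρ j) ∧
  (∀ i, i < n → R (ρ i) (ρ (i+1)))

end LWF

/-!
`Mb(T)` c-separates `T` from the rest: on a route active given `Mb(T)`, the vertex following an
occurrence of `T` is in `Mb(T)`, so it has to lie in a collider section `T → x − ⋯ − y ← w`.
Shortening `x − ⋯ − y` to a chordless walk of distinct vertices shows that `w` is `T`, adjacent
to `T`, or a complex-spouse of `T`; in the last two cases `w ∈ Mb(T)` starts a non-collider
section, which is impossible. Hence the route never leaves `{T} ∪ Mb(T)`. Chords and repetitions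
can be spliced out because, with no partially directed cycles, all vertices of `x − ⋯ − y` lie in
one undirected component and are joined to `T` and `w` only by edges out of `T` and `w`.

Conversely, by faithfulness every admissible `S` c-separates, and the edge `T ∼ v` or the minimal
complex `T → x − ⋯ − y ← v` is a route active given `S` unless `v ∈ S` (for the complex, because
`x ∈ ch(T) ⊆ S`).
-/

theorem Relation.ReflTransGen.exists_injOn_chain {α : Type*} {r : α → α → Prop} {a b : α}
    (h : Relation.ReflTransGen r a b) :
    ∃ (n : ℕ) (f : ℕ → α), f 0 = a ∧ f n = b ∧ (∀ i < n, r (f i) (f (i + 1))) ∧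
      Set.InjOn f (Set.Iic n) := by
  induction h with
  | refl => exact ⟨0, fun _ => a, rfl, rfl, by simp, fun i _ j _ _ => by simp_all⟩
  | @tail w v _ hwv ih =>
    obtain ⟨n, f, h0, hn, hstep, hinj⟩ := ih
    by_cases hv : ∃ i ≤ n, f i = v
    · obtain ⟨i, hin, rfl⟩ := hv
      exact ⟨i, f, h0, rfl, fun k hk => hstep k (by omega),
        hinj.mono (Set.Iic_subset_Iic.2 hin)⟩
    · push Not at hv
      have hf : ∀ i ≤ n, Function.update f (n + 1) v i = f i :=
        fun i hi => Function.update_of_ne (by omega) _ _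
      refine ⟨n + 1, Function.update f (n + 1) v, by rw [hf 0 (by omega), h0], by simp,
        fun i hi => ?_, fun i hi j hj hij => ?_⟩
      · rcases (Nat.lt_succ_iff.1 hi).lt_or_eq with hi | rfl
        · rw [hf i (by omega), hf (i + 1) (by omega)]
          exact hstep i hi
        · rw [hf i le_rfl, Function.update_self, hn]
          exact hwv
      · simp only [Set.mem_Iic] at hi hj
        rcases hi.lt_or_eq with hi | rfl <;> rcases hj.lt_or_eq with hj | rfl
        · rw [hf i (by omega), hf j (by omega)] at hij
          exact hinj (Set.mem_Iic.2 (by omega)) (Set.mem_Iic.2 (by omega)) hij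
        · rw [hf i (by omega), Function.update_self] at hij
          exact absurd hij (hv i (by omega))
        · rw [hf j (by omega), Function.update_self] at hij
          exact absurd hij.symm (hv j (by omega))
        · rfl

namespace LWF.ChainGraph

variable {V : Type*}

section

variable (G : ChainGraph V) {u v w : V}

theorem undir_comm (u v : V) : G.undir u v ↔ G.undir v u :=
  ⟨G.undir_symm u v, G.undir_symm v u⟩

theorem adj_comm (u v : V) : G.Adj u v ↔ G.Adj v u := by
  simp only [Adj, G.undir_comm u v]
  tauto

theorem adj_irrefl (v : V) : ¬ G.Adj v v := by
  rintro (h | h | h)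
  exacts [G.dir_irrefl v h, G.dir_irrefl v h, G.undir_irrefl v h]

theorem not_reflTransGen_of_dir (h : G.dir u v) :
    ¬ Relation.ReflTransGen (fun x y => G.dir x y ∨ G.undir x y) v u := by
  intro hvu
  obtain ⟨n, f, h0, hn, hstep, hinj⟩ := hvu.exists_injOn_chain
  have hn1 : 1 ≤ n := Nat.one_le_iff_ne_zero.2 fun hn0 => G.dir_irrefl u (by simp_all)
  -- close the path `v = f 0, …, f n = u` into the cycle `u, f 0, …, f n`
  refine G.no_partially_directed_cycle (n + 1) (fun i => if i = 0 then u else f (i - 1))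
    (by omega) (by simp [hn]) (fun i j hij hjn => ?_) (fun i _ => ?_) ⟨0, by omega, by simp [h0, h]⟩
  · have hj : j ≠ 0 := by omega
    rcases Nat.eq_zero_or_pos i with rfl | hi
    · simp only [if_pos, hj, if_false, ← hn]
      exact fun heq => absurd (hinj (by simp; omega) (by simp) heq.symm) (by omega)
    · simp only [hi.ne', hj, if_false]
      exact fun heq => absurd (hinj (by simp; omega) (by simp; omega) heq) (by omega)
  · rcases Nat.eq_zero_or_pos i with rfl | hi
    · simp [h0, h]
    · simpa [hi.ne', Nat.sub_add_cancel hi] using hstep (i - 1) (by omega)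

theorem not_dir_of_reflTransGen_undir (h : Relation.ReflTransGen G.undir u v) : ¬ G.dir v u :=
  fun hd => G.not_reflTransGen_of_dir hd (Relation.ReflTransGen.mono (fun _ _ => Or.inr) _ _ h)

theorem ne_of_dir_of_reflTransGen_undir (h : G.dir u v) (hvw : Relation.ReflTransGen G.undir v w) :
    u ≠ w := by
  rintro rfl
  exact G.not_dir_of_reflTransGen_undir hvw h

theorem dir_of_adj_of_reflTransGen_undir (h : G.dir u v)
    (hvw : Relation.ReflTransGen G.undir v w) (hadj : G.Adj u w) : G.dir u w := by
  have hvw' : Relation.ReflTransGen (fun x y => G.dir x y ∨ G.undir x y) v w :=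
    Relation.ReflTransGen.mono (fun _ _ => Or.inr) _ _ hvw
  rcases hadj with huw | hwu | huw
  · exact huw
  · refine absurd ?_ (G.not_reflTransGen_of_dir hwu)
    exact Relation.ReflTransGen.head (r := fun x y => G.dir x y ∨ G.undir x y) (Or.inl h) hvw'
  · exact absurd (hvw'.tail (Or.inr ((G.undir_comm u w).1 huw))) (G.not_reflTransGen_of_dir h)

end

variable {G : ChainGraph V} {T v a b : V} {n : ℕ} {σ : ℕ → V} {Z : Set V}

/-- `a → σ 1 − ⋯ − σ n ← b` with `σ 0 = a`, `σ (n+1) = b`: a minimal complex without the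
requirements that its vertices be distinct and that it be an induced subgraph. -/
structure IsComplexWalk (G : ChainGraph V) (a b : V) (n : ℕ) (σ : ℕ → V) : Prop where
  one_le : 1 ≤ n
  first : σ 0 = a
  last : σ (n + 1) = b
  dir_first : G.dir a (σ 1)
  dir_last : G.dir b (σ n)
  undir_succ : ∀ i, 1 ≤ i → i < n → G.undir (σ i) (σ (i + 1))

theorem IsMinimalComplex.isComplexWalk (h : G.IsMinimalComplex a b n σ) :
    G.IsComplexWalk a b n σ :=
  ⟨h.1, h.2.1, h.2.2.1, h.2.2.2.2.1, h.2.2.2.2.2.1, h.2.2.2.2.2.2.1⟩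

namespace IsComplexWalk

variable (hw : G.IsComplexWalk a b n σ)
include hw

theorem adj_succ {i : ℕ} (hi : i ≤ n) : G.Adj (σ i) (σ (i + 1)) := by
  rcases Nat.eq_zero_or_pos i with rfl | hi0
  · exact Or.inl (hw.first ▸ hw.dir_first)
  rcases hi.lt_or_eq with hin | rfl
  · exact Or.inr (Or.inr (hw.undir_succ i hi0 hin))
  · exact Or.inr (Or.inl (hw.last ▸ hw.dir_last))

theorem reflTransGen_undir {i j : ℕ} (hi : 1 ≤ i) (hin : i ≤ n) (hj : 1 ≤ j) (hjn : j ≤ n) :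
    Relation.ReflTransGen G.undir (σ i) (σ j) := by
  refine Relation.ReflTransGen.lift σ (fun _ _ h => h) _ _
    (reflTransGen_of_succ (fun k l => G.undir (σ k) (σ l)) (fun k hk => ?_) (fun k hk => ?_))
  · simp only [Set.mem_Ico] at hk
    simpa using hw.undir_succ k (by omega) (by omega)
  · simp only [Set.mem_Ico] at hk
    simpa [G.undir_comm (σ (k + 1))] using hw.undir_succ k (by omega) (by omega)

theorem ne_first {j : ℕ} (hj : 1 ≤ j) (hjn : j ≤ n) : a ≠ σ j :=
  G.ne_of_dir_of_reflTransGen_undir hw.dir_first (hw.reflTransGen_undir le_rfl hw.one_le hj hjn)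

theorem ne_last {i : ℕ} (hi : 1 ≤ i) (hin : i ≤ n) : b ≠ σ i :=
  G.ne_of_dir_of_reflTransGen_undir hw.dir_last (hw.reflTransGen_undir hw.one_le le_rfl hi hin)

theorem dir_first_of_adj {j : ℕ} (hj : 1 ≤ j) (hjn : j ≤ n) (h : G.Adj a (σ j)) :
    G.dir a (σ j) :=
  G.dir_of_adj_of_reflTransGen_undir hw.dir_first
    (hw.reflTransGen_undir le_rfl hw.one_le hj hjn) h

theorem dir_last_of_adj {i : ℕ} (hi : 1 ≤ i) (hin : i ≤ n) (h : G.Adj (σ i) b) :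
    G.dir b (σ i) :=
  G.dir_of_adj_of_reflTransGen_undir hw.dir_last
    (hw.reflTransGen_undir hw.one_le le_rfl hi hin) ((G.adj_comm _ _).1 h)

/-- The walk `σ 1 − ⋯ − σ n` lies in one undirected component, so a chain graph has no
directed edge between two of its vertices. -/
theorem undir_of_adj {i j : ℕ} (hi : 1 ≤ i) (hin : i ≤ n) (hj : 1 ≤ j) (hjn : j ≤ n)
    (h : G.Adj (σ i) (σ j)) : G.undir (σ i) (σ j) := by
  rcases h with h | h | h
  · exact absurd h (G.not_dir_of_reflTransGen_undir (hw.reflTransGen_undir hj hjn hi hin))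
  · exact absurd h (G.not_dir_of_reflTransGen_undir (hw.reflTransGen_undir hi hin hj hjn))
  · exact h

/-- Skipping `σ (i+1), …, σ (j-1)` along a chord `σ i ∼ σ j` shortens a complex walk. -/
theorem splice {i j : ℕ} (hij : i + 1 < j) (hjn : j ≤ n + 1) (hend : ¬ (i = 0 ∧ j = n + 1))
    (h : G.Adj (σ i) (σ j)) :
    G.IsComplexWalk a b (n - (j - i - 1))
      (fun t => if t ≤ i then σ t else σ (t + (j - i - 1))) where
  one_le := by omega
  first := by simpa using hw.first
  last := by
    rw [if_neg (by omega), show n - (j - i - 1) + 1 + (j - i - 1) = n + 1 by omega]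
    exact hw.last
  dir_first := by
    rcases Nat.eq_zero_or_pos i with rfl | hi
    · rw [if_neg (by omega), show 1 + (j - 0 - 1) = j by omega]
      exact hw.dir_first_of_adj (by omega) (by omega) (hw.first ▸ h)
    · rw [if_pos (by omega)]
      exact hw.dir_first
  dir_last := by
    rcases hjn.lt_or_eq with hjn | rfl
    · rw [if_neg (by omega), show n - (j - i - 1) + (j - i - 1) = n by omega]
      exact hw.dir_last
    · rw [if_pos (by omega), show n - (n + 1 - i - 1) = i by omega]
      exact hw.dir_last_of_adj (by omega) (by omega) (hw.last ▸ h)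
  undir_succ t ht htn := by
    rcases lt_trichotomy t i with hti | rfl | hti
    · rw [if_pos hti.le, if_pos (by omega)]
      exact hw.undir_succ t ht (by omega)
    · rw [if_pos le_rfl, if_neg (by omega), show t + 1 + (j - t - 1) = j by omega]
      exact hw.undir_of_adj ht (by omega) (by omega) (by omega) h
    · rw [if_neg (by omega), if_neg (by omega),
        show t + 1 + (j - i - 1) = t + (j - i - 1) + 1 by omega]
      exact hw.undir_succ _ (by omega) (by omega)

end IsComplexWalk

theorem isMinimalComplex_of_isComplexWalk (hw : G.IsComplexWalk a b n σ)
    (hne : ∀ i j, i < j → j ≤ n + 1 → σ i ≠ σ j)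
    (hadj : ∀ i j, i < j → j ≤ n + 1 → G.Adj (σ i) (σ j) → j = i + 1) :
    G.IsMinimalComplex a b n σ := by
  refine ⟨hw.one_le, hw.first, hw.last, fun i j hi hj hij => ?_, hw.dir_first, hw.dir_last,
    hw.undir_succ, fun i j hi hj h => ?_⟩
  · rcases Nat.lt_or_gt_of_ne hij with hij | hij
    exacts [hne i j hij hj, (hne j i hij hi).symm]
  · rcases lt_trichotomy i j with hij | rfl | hij
    · exact Or.inl (hadj i j hij hj h)
    · exact absurd h (G.adj_irrefl _)
    · exact Or.inr (hadj j i hij hi ((G.adj_comm _ _).1 h))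

/-- A shortest complex walk between non-adjacent vertices is a minimal complex: a repeated
vertex or a chord would allow a splice. -/
theorem mem_csp_of_isComplexWalk (hw : G.IsComplexWalk a b n σ) (hab : a ≠ b)
    (hnadj : ¬ G.Adj a b) : b ∈ G.csp a := by
  classical
  have hex : ∃ m τ, G.IsComplexWalk a b m τ := ⟨n, σ, hw⟩
  obtain ⟨τ, hτ⟩ := Nat.find_spec hex
  set m := Nat.find hex
  have hshort : ∀ {i j}, i + 1 < j → j ≤ m + 1 → ¬ (i = 0 ∧ j = m + 1) → ¬ G.Adj (τ i) (τ j) :=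
    fun hij hjm hend h => Nat.find_min hex (m := m - (_ - _ - 1)) (by omega)
      ⟨_, hτ.splice hij hjm hend h⟩
  refine ⟨m, τ, isMinimalComplex_of_isComplexWalk hτ (fun i j hij hjm heq => ?_)
    (fun i j hij hjm h => ?_)⟩
  · rcases Nat.eq_zero_or_pos i with rfl | hi
    · rcases hjm.lt_or_eq with hjm | rfl
      · exact hτ.ne_first (by omega) (by omega) (hτ.first ▸ heq)
      · exact hab (hτ.first ▸ hτ.last ▸ heq)
    · rcases hjm.lt_or_eq with hjm | rfl
      · exact hshort (i := i) (j := j + 1) (by omega) (by omega) (by omega)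
          (heq ▸ hτ.adj_succ (by omega))
      · exact hτ.ne_last hi (by omega) (hτ.last ▸ heq).symm
  · by_contra hji
    by_cases hend : i = 0 ∧ j = m + 1
    · obtain ⟨rfl, rfl⟩ := hend
      exact hnadj (hτ.first ▸ hτ.last ▸ h)
    · exact hshort (by omega) hjm hend h

theorem mem_mb_iff : v ∈ G.mb T ↔ G.Adj T v ∨ v ∈ G.csp T := by
  simp only [mb, pa, nb, ch, Adj, Set.mem_union, Set.mem_ofPred_eq, G.undir_comm v T]
  tauto

theorem notMem_mb_self (G : ChainGraph V) (T : V) : T ∉ G.mb T := by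
  intro h
  rcases mem_mb_iff.1 h with h | ⟨n, σ, h⟩
  · exact G.adj_irrefl T h
  · exact h.2.2.2.1 0 (n + 1) (by omega) le_rfl (by omega) (h.2.1.trans h.2.2.1.symm)

theorem mem_mb_of_isComplexWalk (hw : G.IsComplexWalk T v n σ)
    (hvT : v ≠ T) : v ∈ G.mb T := by
  by_cases h : G.Adj T v
  · exact mem_mb_iff.2 (Or.inl h)
  · exact mem_mb_iff.2 (Or.inr (mem_csp_of_isComplexWalk hw hvT.symm h))

namespace Route

variable (ω : Route G)

theorem exists_isSection {k : ℕ} (hk : k ≤ ω.len)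
    (hleft : 0 < k → ¬ G.undir (ω.vtx (k - 1)) (ω.vtx k)) : ∃ e, ω.IsSection k e := by
  classical
  have hex : ∃ e, k ≤ e ∧ e ≤ ω.len ∧ (e < ω.len → ¬ G.undir (ω.vtx e) (ω.vtx (e + 1))) :=
    ⟨ω.len, hk, le_rfl, fun h => absurd h (lt_irrefl _)⟩
  obtain ⟨hke, hel, hright⟩ := Nat.find_spec hex
  refine ⟨Nat.find hex, hke, hel, fun t hkt hte => ?_, hleft, hright⟩
  have := Nat.find_min hex hte
  push Not at this
  exact (this hkt (by omega)).2

theorem IsColliderSection.isComplexWalk {m e : ℕ} (h : ω.IsColliderSection (m + 1) e) :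
    G.IsComplexWalk (ω.vtx m) (ω.vtx (e + 1)) (e - m) (fun t => ω.vtx (m + t)) where
  one_le := by have := h.1.1; omega
  first := rfl
  last := by rw [show m + (e - m + 1) = e + 1 by have := h.1.1; omega]
  dir_first := h.2.2.2.1
  dir_last := by rw [show m + (e - m) = e by have := h.1.1; omega]; exact h.2.2.2.2
  undir_succ i hi hie := by
    simpa only [← add_assoc] using h.1.2.2.1 (m + i) (by omega) (by omega)

variable {ω}

/-- The section through `ω.vtx k` is not entered through an arrowhead, so it is a non-collider
section. -/
theorem Active.notMem_of_undir_run (hact : ω.Active Z) {k l : ℕ} (hl : l ≤ ω.len)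
    (hstart : k = 0 ∨ G.dir (ω.vtx k) (ω.vtx (k - 1)))
    (hrun : ∀ t, k ≤ t → t < l → G.undir (ω.vtx t) (ω.vtx (t + 1))) (hkl : k ≤ l) :
    ω.vtx l ∉ Z := by
  have hnot_undir : 0 < k → ¬ G.undir (ω.vtx (k - 1)) (ω.vtx k) := fun hk hu =>
    G.dir_not_undir _ _ (hstart.resolve_left hk.ne') ((G.undir_comm _ _).1 hu)
  obtain ⟨e, he⟩ := ω.exists_isSection (hkl.trans hl) hnot_undir
  have hle : l ≤ e := by
    by_contra! hel
    exact he.2.2.2.2 (by omega) (hrun e he.1 hel)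
  refine hact.2 k e he (fun hcol => ?_) l hkl hle
  exact G.dir_asymm _ _ (hstart.resolve_left hcol.2.1.ne') hcol.2.2.2.1

theorem Active.notMem_of_start (hact : ω.Active Z) {k : ℕ} (hk : k ≤ ω.len)
    (hstart : k = 0 ∨ G.dir (ω.vtx k) (ω.vtx (k - 1))) : ω.vtx k ∉ Z :=
  hact.notMem_of_undir_run hk hstart (fun _ h₁ h₂ => absurd h₂ (by omega)) le_rfl

theorem Active.vtx_len_mem_of_mb (hact : ω.Active (G.mb T)) {m : ℕ} (hm : m ≤ ω.len)
    (hT : ω.vtx m = T) (hstart : m = 0 ∨ G.dir (ω.vtx m) (ω.vtx (m - 1))) :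
    ω.vtx ω.len ∈ {T} ∪ G.mb T := by
  induction hd : ω.len - m using Nat.strong_induction_on generalizing m with
  | _ d ih =>
  rcases hm.lt_or_eq with hlt | rfl
  swap
  · exact Or.inl hT
  have hnext : ω.vtx (m + 1) ∈ G.mb T := mem_mb_iff.2 (Or.inl (hT ▸ ω.link m hlt))
  rcases ω.link m hlt with hch | hpa | hnb
  · obtain ⟨e, he⟩ := ω.exists_isSection (k := m + 1) hlt fun _ hu => G.dir_not_undir _ _ hch hu
    by_cases hcol : ω.IsColliderSection (m + 1) e
    · have hw := hcol.isComplexWalk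
      rw [hT] at hw
      by_cases hback : ω.vtx (e + 1) = T
      · have := he.1
        exact ih _ (by omega) hcol.2.2.1 hback (Or.inr hcol.2.2.2.2) rfl
      · exact absurd (mem_mb_of_isComplexWalk hw hback)
          (hact.notMem_of_start hcol.2.2.1 (Or.inr hcol.2.2.2.2))
    · exact absurd hnext (hact.2 _ e he hcol _ le_rfl he.1)
  · exact absurd hnext (hact.notMem_of_start hlt (Or.inr hpa))
  · exact absurd hnext
      (hact.notMem_of_undir_run hlt hstart (fun t h₁ h₂ => by rwa [show t = m by omega]) (by omega))

def IsReverse (ω ω' : Route G) : Prop :=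
  ω'.len = ω.len ∧ ∀ i ≤ ω.len, ω'.vtx i = ω.vtx (ω.len - i)

def rev (ω : Route G) : Route G where
  len := ω.len
  vtx i := ω.vtx (ω.len - i)
  link i hi := by
    rw [show ω.len - i = ω.len - (i + 1) + 1 by omega]
    exact (G.adj_comm _ _).1 (ω.link _ (by omega))

theorem isReverse_rev (ω : Route G) : ω.IsReverse ω.rev := ⟨rfl, fun _ _ => rfl⟩

variable {ω ω' : Route G} {s e : ℕ}

theorem IsReverse.vtx_sub (h : ω.IsReverse ω') {i : ℕ} (hi : i ≤ ω.len) :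
    ω'.vtx (ω.len - i) = ω.vtx i := by
  rw [h.2 _ (by omega), Nat.sub_sub_self hi]

theorem IsReverse.symm (h : ω.IsReverse ω') : ω'.IsReverse ω :=
  ⟨h.1.symm, fun i hi => by rw [h.1, h.vtx_sub (h.1 ▸ hi)]⟩

theorem IsSection.of_isReverse (h : ω.IsReverse ω') (hs : ω.IsSection s e) :
    ω'.IsSection (ω.len - e) (ω.len - s) := by
  have hL : ω'.len = ω.len := h.1
  obtain ⟨hse, hel, hrun, hleft, hright⟩ := hs
  refine ⟨by omega, by omega, fun k hk₁ hk₂ => ?_, fun hpos hu => ?_, fun hlt hu => ?_⟩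
  · rw [show k = ω.len - (ω.len - k) by omega,
      show ω.len - (ω.len - k) + 1 = ω.len - (ω.len - k - 1) by omega, h.vtx_sub (by omega),
      h.vtx_sub (by omega), show ω.len - k = ω.len - k - 1 + 1 by omega]
    exact (G.undir_comm _ _).1 (hrun _ (by omega) (by omega))
  · rw [show ω.len - e - 1 = ω.len - (e + 1) by omega, h.vtx_sub (by omega), h.vtx_sub hel] at hu
    exact hright (by omega) ((G.undir_comm _ _).1 hu)
  · rw [show ω.len - s + 1 = ω.len - (s - 1) by omega, h.vtx_sub (by omega),
      h.vtx_sub (by omega)] at hu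
    exact hleft (by omega) ((G.undir_comm _ _).1 hu)

theorem IsColliderSection.of_isReverse (h : ω.IsReverse ω') (hc : ω.IsColliderSection s e) :
    ω'.IsColliderSection (ω.len - e) (ω.len - s) := by
  have hL : ω'.len = ω.len := h.1
  obtain ⟨hs, hpos, hlt, hdir₁, hdir₂⟩ := hc
  have hse := hs.1
  have hel := hs.2.1
  refine ⟨hs.of_isReverse h, by omega, by omega, ?_, ?_⟩
  · rwa [show ω.len - e - 1 = ω.len - (e + 1) by omega, h.vtx_sub (by omega), h.vtx_sub (by omega)]
  · rwa [show ω.len - s + 1 = ω.len - (s - 1) by omega, h.vtx_sub (by omega), h.vtx_sub (by omega)]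

theorem Active.of_isReverse (h : ω.IsReverse ω') (hact : ω.Active Z) : ω'.Active Z := by
  have hL : ω'.len = ω.len := h.1
  have hvtx : ∀ k ≤ ω'.len, ω'.vtx k = ω.vtx (ω'.len - k) := fun k hk => by
    rw [h.2 k (by omega), hL]
  refine ⟨fun s e hc => ?_, fun s e hs hnc k hsk hke => ?_⟩
  · obtain ⟨k, hk₁, hk₂, hk⟩ := hact.1 _ _ (hc.of_isReverse h.symm)
    have := hc.2.2.1
    refine ⟨ω'.len - k, by omega, by omega, ?_⟩
    rwa [hvtx _ (by omega), Nat.sub_sub_self (by omega)]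
  · have hel := hs.2.1
    rw [hvtx k (by omega)]
    refine hact.2 _ _ (hs.of_isReverse h.symm) (fun hc => hnc ?_) _ (by omega) (by omega)
    convert hc.of_isReverse h using 1 <;> omega

end Route

theorem cSep_mb (G : ChainGraph V) (T : V) :
    G.CSep {T} (Set.univ \ ({T} ∪ G.mb T)) (G.mb T) := by
  have key : ∀ ω : Route G, ω.vtx 0 = T → ω.Active (G.mb T) → ω.vtx ω.len ∈ {T} ∪ G.mb T :=
    fun ω h0 hact => hact.vtx_len_mem_of_mb (Nat.zero_le _) h0 (Or.inl rfl)
  rintro ω (⟨h0, -, hlast⟩ | ⟨⟨-, hfirst⟩, hlast⟩) hact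
  · exact hlast (key ω h0 hact)
  · have := key ω.rev (by simpa [Route.rev] using hlast) (hact.of_isReverse ω.isReverse_rev)
    exact hfirst (by simpa [Route.rev] using this)

def Route.ofAdj {u v : V} (h : G.Adj u v) : Route G where
  len := 1
  vtx i := if i = 0 then u else v
  link i hi := by
    obtain rfl : i = 0 := by omega
    simpa using h

theorem Route.ofAdj_active {u v : V} (h : G.Adj u v) (hu : u ∉ Z) (hv : v ∉ Z) :
    (Route.ofAdj h).Active Z := by
  refine ⟨fun s e hc => ?_, fun s e hs _ k _ hke => ?_⟩
  · have : e < 1 := hc.2.2.1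
    exact absurd hc.2.1 (by have := hc.1.1; omega)
  · have : e ≤ 1 := hs.2.1
    rcases (show k = 0 ∨ k = 1 by omega) with rfl | rfl <;> simpa [Route.ofAdj]

namespace IsComplexWalk

def toRoute (hw : G.IsComplexWalk a b n σ) : Route G :=
  ⟨n + 1, σ, fun _ hi => hw.adj_succ (by omega)⟩

variable (hw : G.IsComplexWalk a b n σ)
include hw

theorem isSection_toRoute {s e : ℕ} (h : hw.toRoute.IsSection s e) :
    (s = 0 ∧ e = 0) ∨ (s = 1 ∧ e = n) ∨ (s = n + 1 ∧ e = n + 1) := by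
  obtain ⟨hse, hen, hrun, hleft, hright⟩ := h
  change e ≤ n + 1 at hen
  change ∀ k, s ≤ k → k < e → G.undir (σ k) (σ (k + 1)) at hrun
  change 0 < s → ¬ G.undir (σ (s - 1)) (σ s) at hleft
  change e < n + 1 → ¬ G.undir (σ e) (σ (e + 1)) at hright
  have hfirst : ¬ G.undir (σ 0) (σ 1) :=
    G.dir_not_undir _ _ (hw.first ▸ hw.dir_first)
  have hlast : ¬ G.undir (σ n) (σ (n + 1)) := fun hu =>
    G.dir_not_undir _ _ (hw.last ▸ hw.dir_last) ((G.undir_comm _ _).1 hu)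
  by_cases hs0 : s = 0
  · subst hs0
    exact Or.inl ⟨rfl, by by_contra; exact hfirst (hrun 0 le_rfl (by omega))⟩
  by_cases hsn : s = n + 1
  · exact Or.inr (Or.inr ⟨hsn, by omega⟩)
  have hs1 : s = 1 := by
    by_contra
    refine hleft (by omega) ?_
    simpa [show s - 1 + 1 = s by omega] using hw.undir_succ (s - 1) (by omega) (by omega)
  have hen' : e ≤ n := by
    by_contra
    exact hlast (hrun n (by omega) (by omega))
  refine Or.inr (Or.inl ⟨hs1, ?_⟩)
  by_contra
  exact hright (by omega) (hw.undir_succ e (by omega) (by omega))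

theorem toRoute_active (h1 : σ 1 ∈ Z) (ha : a ∉ Z) (hb : b ∉ Z) : hw.toRoute.Active Z := by
  refine ⟨fun s e hc => ?_, fun s e hs hnc k hsk hke => ?_⟩
  · rcases hw.isSection_toRoute hc.1 with ⟨rfl, -⟩ | ⟨rfl, rfl⟩ | ⟨-, rfl⟩
    · exact absurd hc.2.1 (lt_irrefl 0)
    · exact ⟨1, le_rfl, hw.one_le, Or.inl h1⟩
    · exact absurd hc.2.2.1 (lt_irrefl _)
  · rcases hw.isSection_toRoute hs with ⟨rfl, rfl⟩ | ⟨rfl, rfl⟩ | ⟨rfl, rfl⟩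
    · obtain rfl : k = 0 := by omega
      exact hw.first ▸ ha
    · exact absurd ⟨hs, one_pos, Nat.lt_succ_self _, hw.first ▸ hw.dir_first,
        hw.last ▸ hw.dir_last⟩ hnc
    · obtain rfl : k = n + 1 := by omega
      exact hw.last ▸ hb

end IsComplexWalk

theorem mb_subset_of_cSep {S : Set V} (hTS : T ∉ S)
    (hsep : G.CSep {T} (Set.univ \ ({T} ∪ S)) S) : G.mb T ⊆ S := by
  have hblocked : ∀ ω : Route G, ω.vtx 0 = T → ω.vtx ω.len ∉ {T} ∪ S → ¬ ω.Active S :=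
    fun ω h0 hlast => hsep ω (Or.inl ⟨h0, trivial, hlast⟩)
  have hadj : ∀ v, G.Adj T v → v ∈ S := fun v h => by
    by_contra hvS
    have hvT : v ≠ T := fun hvT => G.adj_irrefl T (hvT ▸ h)
    exact hblocked (Route.ofAdj h) rfl (by simp [Route.ofAdj, hvT, hvS])
      (Route.ofAdj_active h hTS hvS)
  intro v hv
  rcases mem_mb_iff.1 hv with h | ⟨n, σ, hc⟩
  · exact hadj v h
  · by_contra hvS
    have hw := hc.isComplexWalk
    have hvT : v ≠ T := fun hvT => G.notMem_mb_self T (hvT ▸ hv)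
    exact hblocked hw.toRoute hw.first (by simp [IsComplexWalk.toRoute, hw.last, hvT, hvS])
      (hw.toRoute_active (hadj _ (Or.inl hw.dir_first)) hTS hvS)

end LWF.ChainGraph

namespace LWF

theorem mb_unique_minimal_condIndep_general {V : Type*} (G : ChainGraph V)
    (CI : Set V → Set V → Set V → Prop)
    (hGMP : ∀ A B S : Set V, Disjoint A B → Disjoint A S → Disjoint B S →
      G.CSep A B S → CI A B S)
    (hFaithful : ∀ A B S : Set V, Disjoint A B → Disjoint A S → Disjoint B S →
      CI A B S → G.CSep A B S)
    (T : V) :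
    T ∉ G.mb T ∧
    CI {T} (Set.univ \ ({T} ∪ G.mb T)) (G.mb T) ∧
    (∀ S : Set V, T ∉ S → CI {T} (Set.univ \ ({T} ∪ S)) S → G.mb T ⊆ S) := by
  have hdisj : ∀ S : Set V, T ∉ S → Disjoint {T} (Set.univ \ ({T} ∪ S)) ∧ Disjoint {T} S ∧
      Disjoint (Set.univ \ ({T} ∪ S)) S := fun S hTS =>
    ⟨Set.disjoint_sdiff_right.mono_left Set.subset_union_left, Set.disjoint_singleton_left.2 hTS,
      Set.disjoint_sdiff_left.mono_right Set.subset_union_right⟩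
  have hTmb := G.notMem_mb_self T
  refine ⟨hTmb, ?_, fun S hTS hCI => ?_⟩
  · obtain ⟨h₁, h₂, h₃⟩ := hdisj _ hTmb
    exact hGMP _ _ _ h₁ h₂ h₃ (G.cSep_mb T)
  · obtain ⟨h₁, h₂, h₃⟩ := hdisj S hTS
    exact G.mb_subset_of_cSep hTS (hFaithful _ _ _ h₁ h₂ h₃ hCI)

/-- Let `P` be a joint distribution over variables indexed by
`V` that satisfies the global Markov property with respect to the LWF chain
graph `G` and is faithful to `G` (here `P`'s independence structure is
abstracted by a conditional-independence relation `CI` on sets of variables: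
for disjoint sets, c-separation implies conditional independence and
conversely). Then for every `T ∈ V`, `Mb(T)` is the unique inclusion-minimal
set `S ⊆ V ∖ {T}` such that `T` is conditionally independent of
`V ∖ ({T} ∪ S)` given `S` under `P`. -/
theorem mb_unique_minimal_condIndep {V : Type*} [Fintype V] (G : ChainGraph V)
    (CI : Set V → Set V → Set V → Prop)
    (hGMP : ∀ A B S : Set V, Disjoint A B → Disjoint A S → Disjoint B S →
      G.CSep A B S → CI A B S)
    (hFaithful : ∀ A B S : Set V, Disjoint A B → Disjoint A S → Disjoint B S →
      CI A B S → G.CSep A B S)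
    (T : V) :
    T ∉ G.mb T ∧
    CI {T} (Set.univ \ ({T} ∪ G.mb T)) (G.mb T) ∧
    (∀ S : Set V, T ∉ S → CI {T} (Set.univ \ ({T} ∪ S)) S → G.mb T ⊆ S) :=
  mb_unique_minimal_condIndep_general G CI hGMP hFaithful T

end LWF
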